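/- arXiv:1012.5282 — 3 statements merged into one kernel-verified Lean document; each statement's English description precedes it below -/
import Mathlib

section
/- Let R be a commutative ring, F₁, F₂ ∈ R, and let (P, d_P) and (Q, d_Q) be matrix factorizations of F₁ and F₂ respectively (ℤ/2-graded R-modules with odd endomorphisms squaring to F₁·id and F₂·id). Define d on P ⊗_R Q by d = d_P ⊗ id + σ_P ⊗ d_Q, where σ_P acts on homogeneous p ∈ P by σ_P(p) = (−1)^{deg p} p. Then d² = (F₁ + F₂)·id_{P⊗Q}, i.e., (P ⊗ Q, d) is a matrix factorization of F₁ + F₂. -/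
/-!
Expanding, `d² = d_P² ⊗ 1 + σ_P² ⊗ d_Q² + (d_P σ_P + σ_P d_P) ⊗ d_Q`. Here `σ_P² = 1`, and
`σ_P` anticommutes with the odd map `d_P`, so the cross term vanishes and `d² = (F₁ + F₂) • 1`.
On each graded component of `P ⊗ Q` the cancellation of the cross term is the commutation of
`f ⊗ 1` with `1 ⊗ g`.
-/

open TensorProduct

namespace LinearMap

variable {R M N P Q : Type*} [CommRing R]
  [AddCommGroup M] [AddCommGroup N] [AddCommGroup P] [AddCommGroup Q]
  [Module R M] [Module R N] [Module R P] [Module R Q]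

theorem lTensor_rTensor_comm (f : M →ₗ[R] P) (g : N →ₗ[R] Q) (x : M ⊗[R] N) :
    g.lTensor P (f.rTensor N x) = f.rTensor Q (g.lTensor M x) := by
  rw [← comp_apply, lTensor_comp_rTensor, ← comp_apply, rTensor_comp_lTensor]

theorem lTensor_lTensor_of_comp_eq_smul {r : R} {f : N →ₗ[R] Q} {g : Q →ₗ[R] N}
    (h : g ∘ₗ f = r • id) (x : M ⊗[R] N) :
    g.lTensor M (f.lTensor M x) = r • x := by
  rw [← lTensor_comp_apply, h, lTensor_smul, lTensor_id, smul_apply, id_apply]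

theorem rTensor_rTensor_of_comp_eq_smul {r : R} {f : M →ₗ[R] P} {g : P →ₗ[R] M}
    (h : g ∘ₗ f = r • id) (x : M ⊗[R] N) :
    g.rTensor N (f.rTensor N x) = r • x := by
  rw [← rTensor_comp_apply, h, rTensor_smul, rTensor_id, smul_apply, id_apply]

end LinearMap

namespace MatrixFactorization

open LinearMap

variable {R M₀ M₁ N₀ N₁ : Type*} [CommRing R]
  [AddCommGroup M₀] [AddCommGroup M₁] [AddCommGroup N₀] [AddCommGroup N₁]
  [Module R M₀] [Module R M₁] [Module R N₀] [Module R N₁]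
  {F₁ F₂ : R} (a : M₀ →ₗ[R] M₁) (b : M₁ →ₗ[R] M₀) (c : N₀ →ₗ[R] N₁) (e : N₁ →ₗ[R] N₀)

/-- `d²` on the summand `M₀ ⊗ N₀`, where `σ_M = 1`. -/
theorem tensor_sq_even (hM : b ∘ₗ a = F₁ • LinearMap.id)
    (hN : e ∘ₗ c = F₂ • LinearMap.id) (u : M₀ ⊗[R] N₀) (v : M₁ ⊗[R] N₁) :
    e.lTensor M₀ (c.lTensor M₀ u + b.rTensor N₁ v)
      + b.rTensor N₀ (a.rTensor N₀ u - e.lTensor M₁ v) = (F₁ + F₂) • u := by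
  rw [map_add, map_sub, lTensor_lTensor_of_comp_eq_smul hN,
    rTensor_rTensor_of_comp_eq_smul hM, lTensor_rTensor_comm, add_smul]
  abel

/-- `d²` on the summand `M₁ ⊗ N₁`, where `σ_M = -1`. -/
theorem tensor_sq_odd (hM : a ∘ₗ b = F₁ • LinearMap.id)
    (hN : c ∘ₗ e = F₂ • LinearMap.id) (u : M₀ ⊗[R] N₀) (v : M₁ ⊗[R] N₁) :
    a.rTensor N₁ (c.lTensor M₀ u + b.rTensor N₁ v)
      - c.lTensor M₁ (a.rTensor N₀ u - e.lTensor M₁ v) = (F₁ + F₂) • v := by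
  rw [map_add, map_sub, lTensor_lTensor_of_comp_eq_smul hN,
    rTensor_rTensor_of_comp_eq_smul hM, lTensor_rTensor_comm, add_smul]
  abel

end MatrixFactorization

/-- The tensor product of a matrix factorization of `F₁` with a matrix
factorization of `F₂` (with differential `d = d_P ⊗ id + σ_P ⊗ d_Q`, written out on the
graded components) is a matrix factorization of `F₁ + F₂`: `d² = (F₁ + F₂)·id` on each of
the four graded components of `P ⊗ Q`. -/
theorem stmt5 {R P0 P1 Q0 Q1 : Type*} [CommRing R]
    [AddCommGroup P0] [AddCommGroup P1] [AddCommGroup Q0] [AddCommGroup Q1]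
    [Module R P0] [Module R P1] [Module R Q0] [Module R Q1]
    (F1 F2 : R)
    (aP : P0 →ₗ[R] P1) (bP : P1 →ₗ[R] P0) (aQ : Q0 →ₗ[R] Q1) (bQ : Q1 →ₗ[R] Q0)
    (hP1 : bP ∘ₗ aP = F1 • LinearMap.id) (hP2 : aP ∘ₗ bP = F1 • LinearMap.id)
    (hQ1 : bQ ∘ₗ aQ = F2 • LinearMap.id) (hQ2 : aQ ∘ₗ bQ = F2 • LinearMap.id) :
    (∀ (u : P0 ⊗[R] Q0) (v : P1 ⊗[R] Q1),
      TensorProduct.map LinearMap.id bQ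
          (TensorProduct.map LinearMap.id aQ u + TensorProduct.map bP LinearMap.id v)
        + TensorProduct.map bP LinearMap.id
          (TensorProduct.map aP LinearMap.id u - TensorProduct.map LinearMap.id bQ v)
        = (F1 + F2) • u ∧
      TensorProduct.map aP LinearMap.id
          (TensorProduct.map LinearMap.id aQ u + TensorProduct.map bP LinearMap.id v)
        - TensorProduct.map LinearMap.id aQ
          (TensorProduct.map aP LinearMap.id u - TensorProduct.map LinearMap.id bQ v)
        = (F1 + F2) • v) ∧
    (∀ (x : P0 ⊗[R] Q1) (y : P1 ⊗[R] Q0),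
      TensorProduct.map LinearMap.id aQ
          (TensorProduct.map LinearMap.id bQ x + TensorProduct.map bP LinearMap.id y)
        + TensorProduct.map bP LinearMap.id
          (TensorProduct.map aP LinearMap.id x - TensorProduct.map LinearMap.id aQ y)
        = (F1 + F2) • x ∧
      TensorProduct.map aP LinearMap.id
          (TensorProduct.map LinearMap.id bQ x + TensorProduct.map bP LinearMap.id y)
        - TensorProduct.map LinearMap.id bQ
          (TensorProduct.map aP LinearMap.id x - TensorProduct.map LinearMap.id aQ y)
        = (F1 + F2) • y) :=
  ⟨fun u v => ⟨MatrixFactorization.tensor_sq_even aP bP aQ bQ hP1 hQ1 u v,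
      MatrixFactorization.tensor_sq_odd aP bP aQ bQ hP2 hQ2 u v⟩,
    fun x y => ⟨MatrixFactorization.tensor_sq_even aP bP bQ aQ hP1 hQ2 x y,
      MatrixFactorization.tensor_sq_odd aP bP bQ aQ hP2 hQ1 x y⟩⟩
end

section
/- Let R be a commutative ring, F ∈ R, and let (C•) be a bounded complex of R-modules with two endomorphisms α, β of C = ⊕ Cⁿ, where α raises the degree by 1 and β lowers it by 1, satisfying α² = 0, β² = 0, and α∘β + β∘α = F·id. Suppose the complex (C•, α) is exact. If n is the smallest integer with Cⁿ ≠ 0, then α restricted to Cⁿ is injective, the submodule Cⁿ ⊕ α(Cⁿ) ⊆ C is preserved by both α and β, and the induced maps ᾱ, β̄ on the quotient C̄ = C/(Cⁿ ⊕ α(Cⁿ)) again satisfy ᾱ² = 0, β̄² = 0, ᾱβ̄ + β̄ᾱ = F·id, with (C̄•, ᾱ) exact. -/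
/-! Below the lowest nonzero degree the complex vanishes, so exactness there says that `α` is
injective on `C^{n₀}`. Dividing `C^{n₀+1}` by `α(C^{n₀})` then kills the only piece of the
complex that feeds into degree `n₀ + 1`: `α` descends because `α² = 0`, it stays injective on the
quotient by exactness at `n₀ + 1`, and the curvature identity in degree `n₀ + 1` reduces to
`β̄ ᾱ = F` because the term `α β` lands in `α(C^{n₀})`. -/

open LinearMap Submodule

section

variable {R L M N : Type*} [Ring R] [AddCommGroup L] [Module R L] [AddCommGroup M] [Module R M]
  [AddCommGroup N] [Module R N]

theorem LinearMap.injective_of_ker_eq_range_of_subsingleton [Subsingleton L]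
    {f : L →ₗ[R] M} {g : M →ₗ[R] N} (h : ker g = range f) : Function.Injective g := by
  rw [← ker_eq_bot, h, range_eq_bot]
  exact Subsingleton.elim f 0

theorem Submodule.injective_liftQ_range_of_ker_eq_range {f : L →ₗ[R] M} {g : M →ₗ[R] N}
    (h : ker g = range f) : Function.Injective ((range f).liftQ g h.ge) := by
  rw [← ker_eq_bot]
  exact ker_liftQ_eq_bot' _ _ h.symm

end

theorem Submodule.mkQ_comp_comp_liftQ_range_eq_smul {R L M N : Type*} [CommRing R]
    [AddCommGroup L] [Module R L] [AddCommGroup M] [Module R M] [AddCommGroup N] [Module R N]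
    (c : R) {f : L →ₗ[R] M} {g : M →ₗ[R] N} {h : N →ₗ[R] M} {k : M →ₗ[R] L}
    (hle : range f ≤ ker g) (hcurv : f ∘ₗ k + h ∘ₗ g = c • LinearMap.id) :
    ((range f).mkQ ∘ₗ h) ∘ₗ (range f).liftQ g hle = c • LinearMap.id := by
  apply linearMap_qext
  have hhg : h ∘ₗ g = c • LinearMap.id - f ∘ₗ k := eq_sub_of_add_eq' hcurv
  rw [comp_assoc, liftQ_mkQ, comp_assoc, hhg, comp_sub, comp_smul, ← comp_assoc, range_mkQ_comp,
    zero_comp, sub_zero, smul_comp, comp_id, id_comp]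

theorem stmt10_general {R : Type*} [CommRing R] (F : R)
    (C : ℤ → Type*) [∀ n, AddCommGroup (C n)] [∀ n, Module R (C n)]
    (α : ∀ n : ℤ, C n →ₗ[R] C (n + 1)) (β : ∀ n : ℤ, C (n + 1) →ₗ[R] C n)
    (hα2 : ∀ n : ℤ, α (n + 1) ∘ₗ α n = 0)
    (hβ2 : ∀ n : ℤ, β n ∘ₗ β (n + 1) = 0)
    (hcurv : ∀ n : ℤ, α n ∘ₗ β n + β (n + 1) ∘ₗ α (n + 1) = F • LinearMap.id)
    (n0 : ℤ) (hmin : ∀ m : ℤ, m < n0 → Subsingleton (C m))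
    (hexact : ∀ n : ℤ, LinearMap.ker (α (n + 1)) = LinearMap.range (α n)) :
    Function.Injective (α n0) ∧
    ∃ αbar : (C (n0 + 1) ⧸ LinearMap.range (α n0)) →ₗ[R] C (n0 + 1 + 1),
      αbar ∘ₗ (LinearMap.range (α n0)).mkQ = α (n0 + 1) ∧
      α (n0 + 1 + 1) ∘ₗ αbar = 0 ∧
      ((LinearMap.range (α n0)).mkQ ∘ₗ β (n0 + 1)) ∘ₗ β (n0 + 1 + 1) = 0 ∧
      αbar ∘ₗ ((LinearMap.range (α n0)).mkQ ∘ₗ β (n0 + 1))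
          + β (n0 + 1 + 1) ∘ₗ α (n0 + 1 + 1) = F • LinearMap.id ∧
      ((LinearMap.range (α n0)).mkQ ∘ₗ β (n0 + 1)) ∘ₗ αbar = F • LinearMap.id ∧
      Function.Injective αbar ∧
      LinearMap.ker (α (n0 + 1 + 1)) = LinearMap.range αbar := by
  have hinj : Function.Injective (α n0) := by
    obtain ⟨m, rfl⟩ : ∃ m, m + 1 = n0 := ⟨n0 - 1, by omega⟩
    have := hmin m (by omega)
    exact injective_of_ker_eq_range_of_subsingleton (hexact m)
  have hle := (hexact n0).ge
  refine ⟨hinj, (range (α n0)).liftQ _ hle, liftQ_mkQ _ _ hle, ?_, ?_, ?_,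
    mkQ_comp_comp_liftQ_range_eq_smul F hle (hcurv n0),
    injective_liftQ_range_of_ker_eq_range (hexact n0), ?_⟩
  · exact linearMap_qext _ (by rw [comp_assoc, liftQ_mkQ, hα2, zero_comp])
  · rw [comp_assoc, hβ2, comp_zero]
  · rw [← comp_assoc, liftQ_mkQ, hcurv]
  · rw [range_liftQ, hexact]

/-- Inductive step for an exact bounded curved Koszul-type complex:
`α` raises degree, `β` lowers degree, `α² = 0`, `β² = 0`, `α∘β + β∘α = F·id`, and `(C•, α)`
is exact.  If `n₀` is the smallest degree with `C^{n₀} ≠ 0`, then `α` is injective on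
`C^{n₀}`, and on the quotient `C^{n₀+1}/α(C^{n₀})` the maps `α`, `β` descend to maps
`ᾱ`, `β̄` satisfying the same relations, with the quotient complex again exact (expressed
at the degrees where it changed). -/
theorem stmt10 {R : Type*} [CommRing R] (F : R)
    (C : ℤ → Type*) [∀ n, AddCommGroup (C n)] [∀ n, Module R (C n)]
    (α : ∀ n : ℤ, C n →ₗ[R] C (n + 1)) (β : ∀ n : ℤ, C (n + 1) →ₗ[R] C n)
    (hbdd : ∃ Nb : ℤ, ∀ m : ℤ, Nb < m → Subsingleton (C m))
    (hα2 : ∀ n : ℤ, α (n + 1) ∘ₗ α n = 0)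
    (hβ2 : ∀ n : ℤ, β n ∘ₗ β (n + 1) = 0)
    (hcurv : ∀ n : ℤ, α n ∘ₗ β n + β (n + 1) ∘ₗ α (n + 1) = F • LinearMap.id)
    (n0 : ℤ) (hmin : ∀ m : ℤ, m < n0 → Subsingleton (C m)) (hne : Nontrivial (C n0))
    (hexact : ∀ n : ℤ, LinearMap.ker (α (n + 1)) = LinearMap.range (α n)) :
    Function.Injective (α n0) ∧
    ∃ αbar : (C (n0 + 1) ⧸ LinearMap.range (α n0)) →ₗ[R] C (n0 + 1 + 1),
      αbar ∘ₗ (LinearMap.range (α n0)).mkQ = α (n0 + 1) ∧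
      α (n0 + 1 + 1) ∘ₗ αbar = 0 ∧
      ((LinearMap.range (α n0)).mkQ ∘ₗ β (n0 + 1)) ∘ₗ β (n0 + 1 + 1) = 0 ∧
      αbar ∘ₗ ((LinearMap.range (α n0)).mkQ ∘ₗ β (n0 + 1))
          + β (n0 + 1 + 1) ∘ₗ α (n0 + 1 + 1) = F • LinearMap.id ∧
      ((LinearMap.range (α n0)).mkQ ∘ₗ β (n0 + 1)) ∘ₗ αbar = F • LinearMap.id ∧
      Function.Injective αbar ∧
      LinearMap.ker (α (n0 + 1 + 1)) = LinearMap.range αbar :=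
  stmt10_general F C α β hα2 hβ2 hcurv n0 hmin hexact
end

section
/- Let k be a field, R = k[x, y], and F = xy. Consider the matrix factorization P of F given by P₀ = R, P₁ = R with α: P₀ → P₁ multiplication by x and β: P₁ → P₀ multiplication by y. Then the cohomology of the endomorphism complex (End_R(P), D) (with the graded commutator differential) is isomorphic to k = R/(x, y), concentrated in even degree. -/
/-! The even cocycles of `End(P)` are the diagonal maps `(f, f)`, since `x` is a nonzero divisor,
and the even coboundaries are those with `f ∈ (x, y)`; so the even cohomology is `R/(x, y)`.
An odd cocycle `(g₀, g₁)` satisfies `y g₀ + x g₁ = 0`, and since `x, y` is a regular sequence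
it has the form `(x t, -y t) = D(t, 0)`; so the odd cohomology vanishes. -/

noncomputable section

variable (k : Type*) [Field k]

/-- `R = k[x,y]`. -/
abbrev KR := MvPolynomial (Fin 2) k

/-- The differential on the even part of `End(P)` for the matrix factorization
`(R ⇄ R, x, y)` of `xy`:  `D(f₀, f₁) = (x·(f₀ − f₁), y·(f₁ − f₀))`. -/
def Dev : (KR k × KR k) →ₗ[KR k] KR k × KR k :=
  LinearMap.prod
    ((MvPolynomial.X (0 : Fin 2) : KR k) •
      (LinearMap.fst (KR k) (KR k) (KR k) - LinearMap.snd (KR k) (KR k) (KR k)))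
    ((MvPolynomial.X (1 : Fin 2) : KR k) •
      (LinearMap.snd (KR k) (KR k) (KR k) - LinearMap.fst (KR k) (KR k) (KR k)))

/-- The differential on the odd part of `End(P)`:  `D(g₀, g₁) = (y·g₀ + x·g₁, x·g₁ + y·g₀)`. -/
def Dodd : (KR k × KR k) →ₗ[KR k] KR k × KR k :=
  LinearMap.prod
    ((MvPolynomial.X (1 : Fin 2) : KR k) • LinearMap.fst (KR k) (KR k) (KR k)
      + (MvPolynomial.X (0 : Fin 2) : KR k) • LinearMap.snd (KR k) (KR k) (KR k))
    ((MvPolynomial.X (0 : Fin 2) : KR k) • LinearMap.snd (KR k) (KR k) (KR k)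
      + (MvPolynomial.X (1 : Fin 2) : KR k) • LinearMap.fst (KR k) (KR k) (KR k))

open MvPolynomial

theorem Prime.exists_eq_mul_of_mul_add_mul_eq_zero {R : Type*} [CommRing R] [IsDomain R]
    {x y a b : R} (hx : Prime x) (hxy : ¬x ∣ y) (h : y * a + x * b = 0) :
    ∃ t, a = x * t ∧ b = -(y * t) := by
  obtain ⟨t, rfl⟩ : x ∣ a :=
    (hx.dvd_mul.mp ⟨-b, by linear_combination h⟩).resolve_left hxy
  refine ⟨t, rfl, mul_left_cancel₀ hx.ne_zero ?_⟩
  linear_combination h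

@[simp]
theorem Dev_apply (p : KR k × KR k) :
    Dev k p = (X 0 * (p.1 - p.2), X 1 * (p.2 - p.1)) := by
  simp [Dev, smul_eq_mul]

@[simp]
theorem Dodd_apply (p : KR k × KR k) :
    Dodd k p = (X 1 * p.1 + X 0 * p.2, X 1 * p.1 + X 0 * p.2) := by
  simp only [Dodd, LinearMap.prod_apply, Function.prod_apply, LinearMap.add_apply,
    LinearMap.smul_apply, LinearMap.fst_apply, LinearMap.snd_apply, smul_eq_mul, Prod.mk.injEq,
    true_and]
  ring

theorem mem_ker_Dev_iff (p : KR k × KR k) : p ∈ LinearMap.ker (Dev k) ↔ p.2 = p.1 := by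
  rw [LinearMap.mem_ker, Dev_apply, Prod.ext_iff]
  constructor
  · rintro ⟨h, -⟩
    exact (sub_eq_zero.mp ((mul_eq_zero.mp h).resolve_left (X_ne_zero 0))).symm
  · intro h
    simp [h]

theorem mem_range_Dodd_iff (q : KR k × KR k) :
    q ∈ LinearMap.range (Dodd k) ↔
      q.2 = q.1 ∧ q.1 ∈ Ideal.span {(X (0 : Fin 2) : KR k), X 1} := by
  constructor
  · rintro ⟨g, rfl⟩
    exact ⟨by simp, Ideal.mem_span_pair.mpr ⟨g.2, g.1, by rw [Dodd_apply]; ring⟩⟩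
  · rintro ⟨h₂, h₁⟩
    obtain ⟨a, b, hab⟩ := Ideal.mem_span_pair.mp h₁
    refine ⟨(b, a), Prod.ext ?_ ?_⟩
    · simp only [Dodd_apply]
      linear_combination hab
    · simp only [Dodd_apply, h₂]
      linear_combination hab

theorem ker_Dodd_le_range_Dev : LinearMap.ker (Dodd k) ≤ LinearMap.range (Dev k) := by
  intro p hp
  have h : X 1 * p.1 + X 0 * p.2 = 0 := congrArg Prod.fst hp
  have hxy : ¬(X 0 : KR k) ∣ X 1 := by simp [X_dvd_X]
  obtain ⟨t, h₁, h₂⟩ := (X_prime (R := k) (i := 0)).exists_eq_mul_of_mul_add_mul_eq_zero hxy h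
  exact ⟨(t, 0), Prod.ext (by simp [h₁]) (by simp [h₂])⟩

def evenCocycleToQuotient :
    LinearMap.ker (Dev k) →ₗ[KR k] KR k ⧸ Ideal.span {(X (0 : Fin 2) : KR k), X 1} :=
  (Submodule.mkQ _) ∘ₗ LinearMap.fst (KR k) (KR k) (KR k) ∘ₗ (LinearMap.ker (Dev k)).subtype

theorem evenCocycleToQuotient_surjective : Function.Surjective (evenCocycleToQuotient k) := by
  rintro ⟨r⟩
  exact ⟨⟨(r, r), (mem_ker_Dev_iff k (r, r)).mpr rfl⟩, rfl⟩

theorem ker_evenCocycleToQuotient :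
    LinearMap.ker (evenCocycleToQuotient k) =
      Submodule.comap (LinearMap.ker (Dev k)).subtype (LinearMap.range (Dodd k)) := by
  ext ⟨p, hp⟩
  simp only [Submodule.mem_comap, mem_range_Dodd_iff, LinearMap.mem_ker, evenCocycleToQuotient,
    LinearMap.comp_apply, Submodule.subtype_apply, LinearMap.fst_apply, Submodule.mkQ_apply,
    Submodule.Quotient.mk_eq_zero, (mem_ker_Dev_iff k p).mp hp, true_and]

/-- For `R = k[x,y]`, `F = xy` and the matrix factorization
`P = (R ⇄ R, x, y)`, the cohomology of `(End_R(P), D)` is `k = R/(x,y)`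
concentrated in even degree: the even cohomology is isomorphic to `R/(x,y)`
and the odd cohomology vanishes. -/
theorem stmt11 :
    Nonempty
      ((↥(LinearMap.ker (Dev k)) ⧸
          Submodule.comap (LinearMap.ker (Dev k)).subtype (LinearMap.range (Dodd k)))
        ≃ₗ[KR k]
       (KR k ⧸ Ideal.span {(MvPolynomial.X (0 : Fin 2) : KR k), MvPolynomial.X (1 : Fin 2)})) ∧
    Subsingleton
      (↥(LinearMap.ker (Dodd k)) ⧸
        Submodule.comap (LinearMap.ker (Dodd k)).subtype (LinearMap.range (Dev k))) := by
  refine ⟨⟨(Submodule.quotEquivOfEq _ _ (ker_evenCocycleToQuotient k).symm).trans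
    ((evenCocycleToQuotient k).quotKerEquivOfSurjective (evenCocycleToQuotient_surjective k))⟩, ?_⟩
  rw [Submodule.comap_subtype_eq_top.mpr (ker_Dodd_le_range_Dev k)]
  exact Submodule.Quotient.subsingleton_iff.mpr rfl

end
end
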